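/- If p is an order reversing pair on A (p0(b) + p1(b) = #A + 1 for all b ∈ A), then p is the only standard pair in its Rauzy class. -/

import Mathlib

/-- A "pair" on a finite alphabet `A`: two bijections (rows) from `A`
to positions `Fin (card A)` (position `i` represents the value `i+1`). -/
structure RPair (A : Type*) [Fintype A] where
  p : Fin 2 → A ≃ Fin (Fintype.card A)

variable {A : Type*} [Fintype A]

/-- The Rauzy move of type `ε`, as a relation: `Q = ε • P`. Row `ε` is fixed;
in row `1-ε` the last entry is cycled to just after the letter `z` occupying the
last position of row `ε` (0-indexed positions). -/
def Rmove (ε : Fin 2) (P Q : RPair A) : Prop :=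
  Q.p ε = P.p ε ∧
  ∀ z : A, ((P.p ε) z).val = Fintype.card A - 1 →
    ∀ b : A, ((Q.p (1 - ε)) b).val =
      if ((P.p (1 - ε)) b).val ≤ ((P.p (1 - ε)) z).val then ((P.p (1 - ε)) b).val
      else if ((P.p (1 - ε)) b).val < Fintype.card A - 1 then ((P.p (1 - ε)) b).val + 1
      else ((P.p (1 - ε)) z).val + 1

/-- A pair is irreducible if its two rows never occupy the first `k` positions
with the same set of letters, for `0 < k < card A`. -/
def IrreduciblePair (P : RPair A) : Prop :=
  ∀ k : ℕ, 0 < k → k < Fintype.card A →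
    {a : A | ((P.p 0) a).val < k} ≠ {a : A | ((P.p 1) a).val < k}

/-- A pair is standard if the first letter of each row is the last letter of the other. -/
def StandardPair (P : RPair A) : Prop :=
  (∀ a : A, ((P.p 0) a).val = 0 → ((P.p 1) a).val = Fintype.card A - 1) ∧
  (∀ z : A, ((P.p 1) z).val = 0 → ((P.p 0) z).val = Fintype.card A - 1)

/-- `Q` is reachable from `P` by finitely many Rauzy moves. -/
def InRauzyClass (P Q : RPair A) : Prop :=
  Relation.ReflTransGen (fun X Y : RPair A => ∃ ε, Rmove ε X Y) P Q

/-- A pair is order reversing if `p0(b) + p1(b) = #A + 1` for every letter `b`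
(0-indexed: the positions sum to `#A - 1`). -/
def OrderReversing {A : Type*} [Fintype A] (P : RPair A) : Prop :=
  ∀ b : A, ((P.p 0) b).val + ((P.p 1) b).val = Fintype.card A - 1

/-!
Index the letters by their positions in a row of `P`. Every pair in the Rauzy class of the order
reversing pair `P` is described by two mutually conjugate lists `y` and `z` with
`|y| + |z| + 2 ≤ #A`: its bottom row is the top row of `P` read backwards, except that the first
`|y|` letters are taken out and put back in decreasing blocks, those with `y[m] = v` right after
the `(v + 1)`-st remaining letter; symmetrically for its top row and `z`. A Rauzy move of type 0
appends `|z|` to `y` or, when `|y| + |z| + 2 = #A`, deletes the entries of `y` equal to `|z|`;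
type 1 acts symmetrically on `z`. The first letter of each row never moves and a reinserted letter
never reaches the last position, so a standard pair in the class has `y = z = []`: it is `P`.
-/

namespace List

def countLt (y : List ℕ) (k : ℕ) : ℕ := y.countP (· < k)

@[simp]
theorem countLt_nil (k : ℕ) : ([] : List ℕ).countLt k = 0 := rfl

theorem countLt_append (y y' : List ℕ) (k : ℕ) :
    (y ++ y').countLt k = y.countLt k + y'.countLt k :=
  countP_append

theorem countLt_append_singleton (y : List ℕ) (a k : ℕ) :
    (y ++ [a]).countLt k = y.countLt k + if a < k then 1 else 0 := by
  rw [countLt_append]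
  by_cases h : a < k <;> simp [countLt, h]

theorem countLt_le_length (y : List ℕ) (k : ℕ) : y.countLt k ≤ y.length :=
  countP_le_length

theorem countLt_mono (y : List ℕ) {k k' : ℕ} (h : k ≤ k') : y.countLt k ≤ y.countLt k' :=
  countP_mono_left fun a _ ha => by simp only [decide_eq_true_eq] at ha ⊢; omega

theorem countLt_eq_length {y : List ℕ} {k : ℕ} (h : ∀ a ∈ y, a < k) :
    y.countLt k = y.length :=
  countP_eq_length.2 fun a ha => by simpa using h a ha

theorem countLt_eq_zero {y : List ℕ} {k : ℕ} (h : ∀ a ∈ y, k ≤ a) : y.countLt k = 0 :=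
  countP_eq_zero.2 fun a ha => by simpa using h a ha

theorem getD_mem_of_lt {y : List ℕ} {i : ℕ} (hi : i < y.length) : y.getD i 0 ∈ y := by
  rw [getD_eq_getElem y 0 hi]
  exact getElem_mem hi

theorem getD_take {y : List ℕ} {i k : ℕ} (hi : i < k) :
    (y.take k).getD i 0 = y.getD i 0 := by
  simp [getD_eq_getElem?_getD, hi]

theorem pairwise_le_append_singleton {y : List ℕ} {r : ℕ} (hy : y.Pairwise (· ≤ ·))
    (hb : ∀ a ∈ y, a ≤ r) : (y ++ [r]).Pairwise (· ≤ ·) :=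
  pairwise_append.2
    ⟨hy, pairwise_singleton _ _, fun a ha _ hr => mem_singleton.1 hr ▸ hb a ha⟩

section Sorted

variable {y : List ℕ} (hy : y.Pairwise (· ≤ ·))
include hy

theorem countLt_le_iff {i k : ℕ} (hi : i < y.length) :
    y.countLt k ≤ i ↔ k ≤ y.getD i 0 := by
  induction y generalizing i with
  | nil => simp at hi
  | cons a l ih =>
    obtain ⟨ha, hl⟩ := pairwise_cons.1 hy
    by_cases hak : a < k
    · have hcount : (a :: l).countLt k = l.countLt k + 1 := by simp [countLt, hak]
      cases i with
      | zero => simp only [hcount, getD_cons_zero]; omega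
      | succ i =>
        rw [hcount, getD_cons_succ, ← ih hl (by simpa using hi)]
        omega
    · have hcount : (a :: l).countLt k = 0 := countLt_eq_zero fun b hb => by
        rcases mem_cons.1 hb with rfl | hb
        · omega
        · have := ha b hb; omega
      simp only [hcount, Nat.zero_le, true_iff]
      cases i with
      | zero => simp only [getD_cons_zero]; omega
      | succ i =>
        have := ha _ (getD_mem_of_lt (by simpa using hi : i < l.length))
        rw [getD_cons_succ]
        omega

theorem lt_countLt_iff {i k : ℕ} (hi : i < y.length) : i < y.countLt k ↔ y.getD i 0 < k := by
  have := countLt_le_iff hy hi (k := k)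
  omega

theorem countLt_getD_le {i : ℕ} (hi : i < y.length) : y.countLt (y.getD i 0) ≤ i :=
  (countLt_le_iff hy hi).2 le_rfl

theorem lt_countLt_getD_add_one {i : ℕ} (hi : i < y.length) :
    i < y.countLt (y.getD i 0 + 1) :=
  (lt_countLt_iff hy hi).2 (Nat.lt_succ_self _)

theorem le_of_mem_drop_countLt {r a : ℕ} (ha : a ∈ y.drop (y.countLt r)) : r ≤ a := by
  obtain ⟨m, hm, rfl⟩ := mem_iff_getElem.1 ha
  rw [length_drop] at hm
  rw [getElem_drop, ← getD_eq_getElem _ 0]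
  exact (countLt_le_iff hy (by omega)).1 (by omega)

theorem countLt_take_countLt {k r : ℕ} (hk : k ≤ r) :
    (y.take (y.countLt r)).countLt k = y.countLt k := by
  have hsplit : y.countLt k =
      (y.take (y.countLt r)).countLt k + (y.drop (y.countLt r)).countLt k := by
    rw [← countLt_append, take_append_drop]
  have hdrop : (y.drop (y.countLt r)).countLt k = 0 :=
    countLt_eq_zero fun a ha => hk.trans (le_of_mem_drop_countLt hy ha)
  omega

theorem countLt_take_countLt_of_le {k r : ℕ} (hk : r ≤ k) :
    (y.take (y.countLt r)).countLt k = y.countLt r := by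
  have hlen : (y.take (y.countLt r)).length = y.countLt r :=
    length_take_of_le (countLt_le_length y r)
  refine (countLt_eq_length fun a ha => ?_).trans hlen
  obtain ⟨i, hi, rfl⟩ := mem_iff_getElem.1 ha
  rw [hlen] at hi
  rw [getElem_take, ← getD_eq_getElem _ 0]
  exact ((lt_countLt_iff hy (hi.trans_le (countLt_le_length y r))).1 hi).trans_le hk

end Sorted

end List

namespace Rauzy

open List

/-- List the indices `n - 1, …, 1, 0` in decreasing order, pull out the indices `m < y.length`
and reinsert them so that those with `y[m] = v` form a decreasing block right after the index
`n - 1 - v`. For sorted `y`, `insertionPos n y m` is the resulting position of `m`. -/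
def insertionPos (n : ℕ) (y : List ℕ) (m : ℕ) : ℕ :=
  if m < y.length then y.getD m 0 + y.countLt (y.getD m 0) + y.countLt (y.getD m 0 + 1) - m
  else (n - 1 - m) + y.countLt (n - 1 - m)

/-- The position after a Rauzy move, in the row that changes, of the letter at position `p`,
when the letter ending the other row sits at position `k` (compare `Rmove`). -/
def cycleAfter (n k p : ℕ) : ℕ :=
  if p ≤ k then p else if p < n - 1 then p + 1 else k + 1

variable {n m r : ℕ} {y z : List ℕ}

theorem insertionPos_of_length_le (hm : y.length ≤ m) :
    insertionPos n y m = (n - 1 - m) + y.countLt (n - 1 - m) := by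
  simp [insertionPos, Nat.not_lt.2 hm]

theorem insertionPos_add_of_lt_length (hy : y.Pairwise (· ≤ ·)) (hm : m < y.length) :
    insertionPos n y m + m =
      y.getD m 0 + y.countLt (y.getD m 0) + y.countLt (y.getD m 0 + 1) := by
  have := lt_countLt_getD_add_one hy hm
  simp only [insertionPos, if_pos hm]
  omega

theorem insertionPos_nil : insertionPos n [] m = n - 1 - m := by
  simp [insertionPos_of_length_le]

theorem insertionPos_sub_one (hn : y.length < n) : insertionPos n y (n - 1) = 0 := by
  rw [insertionPos_of_length_le (by omega), Nat.sub_self, countLt_eq_zero fun _ _ => Nat.zero_le _]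

theorem insertionPos_length (hb : ∀ a ∈ y, a ≤ r) (hn : y.length + r + 2 ≤ n) :
    insertionPos n y y.length = n - 1 := by
  rw [insertionPos_of_length_le le_rfl, countLt_eq_length fun a ha => by have := hb a ha; omega]
  omega

theorem insertionPos_lt_of_lt_length (hy : y.Pairwise (· ≤ ·)) (hb : ∀ a ∈ y, a ≤ r)
    (hn : y.length + r + 2 ≤ n) (hm : m < y.length) : insertionPos n y m < n - 1 := by
  have hpos := insertionPos_add_of_lt_length (n := n) hy hm
  have := countLt_getD_le hy hm
  have := countLt_le_length y (y.getD m 0 + 1)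
  have := hb _ (getD_mem_of_lt hm)
  omega

theorem insertionPos_append_length (hy : y.Pairwise (· ≤ ·)) (hb : ∀ a ∈ y, a ≤ r) :
    insertionPos n (y ++ [r]) y.length = r + y.countLt r + 1 := by
  have hpos := insertionPos_add_of_lt_length (n := n) (pairwise_le_append_singleton hy hb)
    (by simp : y.length < (y ++ [r]).length)
  rw [getD_append_right _ _ _ _ le_rfl, Nat.sub_self, getD_cons_zero, countLt_append_singleton,
    countLt_append_singleton, if_neg (by omega), if_pos (by omega),
    countLt_eq_length fun a ha => Nat.lt_succ_of_le (hb a ha)] at hpos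
  omega

theorem cycleAfter_insertionPos_append (hy : y.Pairwise (· ≤ ·)) (hb : ∀ a ∈ y, a ≤ r)
    (hn : y.length + r + 3 ≤ n) (hm : m < n) :
    cycleAfter n (r + y.countLt r) (insertionPos n y m) = insertionPos n (y ++ [r]) m := by
  have hcount_r := countLt_le_length y r
  unfold cycleAfter
  rcases lt_trichotomy m y.length with hm | rfl | hm
  · have hpos := insertionPos_add_of_lt_length (n := n) hy hm
    have hpos' := insertionPos_add_of_lt_length (n := n) (pairwise_le_append_singleton hy hb)
      (by simp; omega : m < (y ++ [r]).length)
    have := countLt_getD_le hy hm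
    have := lt_countLt_getD_add_one hy hm
    rw [getD_append _ _ _ _ hm, countLt_append_singleton, countLt_append_singleton] at hpos'
    rcases (hb _ (getD_mem_of_lt hm)).lt_or_eq with hv | hv
    · have := countLt_mono y (by omega : y.getD m 0 + 1 ≤ r)
      rw [if_neg (by omega), if_neg (by omega)] at hpos'
      rw [if_pos (by omega)]
      omega
    · have hcount_succ : y.countLt (r + 1) = y.length :=
        countLt_eq_length fun a ha => Nat.lt_succ_of_le (hb a ha)
      have hlt := insertionPos_lt_of_lt_length (n := n) hy hb (by omega) hm
      rw [hv] at hpos hpos'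
      rw [if_neg (by omega), if_pos (by omega)] at hpos'
      rw [if_neg (by omega), if_pos hlt]
      omega
  · rw [insertionPos_length hb (by omega), insertionPos_append_length hy hb, if_neg (by omega),
      if_neg (by omega)]
  · rw [insertionPos_of_length_le hm.le, insertionPos_of_length_le (by simp; omega),
      countLt_append_singleton]
    by_cases hr : r < n - 1 - m
    · rw [countLt_eq_length fun a ha => (hb a ha).trans_lt hr, if_pos hr, if_neg (by omega),
        if_pos (by omega)]
      omega
    · have := countLt_mono y (by omega : n - 1 - m ≤ r)
      rw [if_neg hr, if_pos (by omega)]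
      omega

theorem cycleAfter_insertionPos_take (hy : y.Pairwise (· ≤ ·)) (hb : ∀ a ∈ y, a ≤ r)
    (hn : y.length + r + 2 = n) (hm : m < n) :
    cycleAfter n (r + y.countLt r) (insertionPos n y m) =
      insertionPos n (y.take (y.countLt r)) m := by
  have hcount_r := countLt_le_length y r
  have hlen : (y.take (y.countLt r)).length = y.countLt r := length_take_of_le hcount_r
  unfold cycleAfter
  rcases lt_or_ge m (y.countLt r) with hmr | hmr
  · have hm' : m < y.length := by omega
    have hv : y.getD m 0 < r := (lt_countLt_iff hy hm').1 hmr
    have hpos := insertionPos_add_of_lt_length (n := n) hy hm'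
    have hpos' := insertionPos_add_of_lt_length (n := n) (hy.sublist (take_sublist _ _))
      (by omega : m < (y.take (y.countLt r)).length)
    rw [getD_take hmr, countLt_take_countLt hy (by omega : y.getD m 0 ≤ r),
      countLt_take_countLt hy (by omega : y.getD m 0 + 1 ≤ r)] at hpos'
    have := countLt_getD_le hy hm'
    have := countLt_mono y (by omega : y.getD m 0 + 1 ≤ r)
    rw [if_pos (by omega)]
    omega
  rw [insertionPos_of_length_le (y := y.take (y.countLt r)) (by omega)]
  rcases lt_or_ge y.length m with hm' | hm'
  · have := countLt_mono y (by omega : n - 1 - m ≤ r)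
    rw [insertionPos_of_length_le hm'.le, countLt_take_countLt hy (by omega), if_pos (by omega)]
  rw [countLt_take_countLt_of_le hy (by omega)]
  rcases hm'.lt_or_eq with hm' | rfl
  · have hv : y.getD m 0 = r := le_antisymm (hb _ (getD_mem_of_lt hm'))
      ((countLt_le_iff hy hm').1 hmr)
    have hpos := insertionPos_add_of_lt_length (n := n) hy hm'
    have hlt := insertionPos_lt_of_lt_length (n := n) hy hb (by omega) hm'
    rw [hv, countLt_eq_length fun a ha => Nat.lt_succ_of_le (hb a ha)] at hpos
    rw [if_neg (by omega), if_pos hlt]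
    omega
  · rw [insertionPos_length hb (by omega), if_neg (by omega), if_neg (by omega)]
    omega

def IsConjugate (y z : List ℕ) : Prop :=
  ∀ i < y.length, y.getD i 0 = z.countLt (i + 1)

theorem IsConjugate.pairwise_le (h : IsConjugate y z) : y.Pairwise (· ≤ ·) := by
  rw [pairwise_iff_getElem]
  intro i j hi hj hij
  rw [← getD_eq_getElem _ 0, ← getD_eq_getElem _ 0, h i hi, h j hj]
  exact countLt_mono z (by omega)

theorem IsConjugate.le_length (h : IsConjugate y z) {a : ℕ} (ha : a ∈ y) : a ≤ z.length := by
  obtain ⟨i, hi, rfl⟩ := mem_iff_getElem.1 ha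
  rw [← getD_eq_getElem _ 0, h i hi]
  exact countLt_le_length _ _

structure IsInsertionData (n : ℕ) (y z : List ℕ) : Prop where
  left : IsConjugate y z
  right : IsConjugate z y
  length_add_length_add_two_le : y.length + z.length + 2 ≤ n

namespace IsInsertionData

theorem symm (h : IsInsertionData n y z) : IsInsertionData n z y :=
  ⟨h.right, h.left, by have := h.length_add_length_add_two_le; omega⟩

theorem nil (hn : 2 ≤ n) : IsInsertionData n [] [] :=
  ⟨fun _ hi => absurd hi (by simp), fun _ hi => absurd hi (by simp), hn⟩

theorem append (h : IsInsertionData n y z) (hn : y.length + z.length + 3 ≤ n) :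
    IsInsertionData n (y ++ [z.length]) z where
  left i hi := by
    rcases lt_or_ge i y.length with hi' | hi'
    · rw [getD_append _ _ _ _ hi', h.left i hi']
    · obtain rfl : i = y.length := by simp at hi; omega
      rw [getD_append_right _ _ _ _ le_rfl, Nat.sub_self, getD_cons_zero,
        countLt_eq_length fun a ha => Nat.lt_succ_of_le (h.right.le_length ha)]
  right j hj := by
    rw [h.right j hj, countLt_append_singleton, if_neg (by omega), add_zero]
  length_add_length_add_two_le := by simp; omega

theorem take_countLt (h : IsInsertionData n y z) :
    IsInsertionData n (y.take (y.countLt z.length)) z where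
  left i hi := by
    rw [length_take] at hi
    rw [getD_take (by omega), h.left i (by omega)]
  right j hj := by
    rw [h.right j hj, countLt_take_countLt h.left.pairwise_le (by omega)]
  length_add_length_add_two_le := by
    have := h.length_add_length_add_two_le
    simp only [length_take]
    omega

end IsInsertionData

end Rauzy

namespace RPair

def swap (X : RPair A) : RPair A := ⟨fun i => X.p (1 - i)⟩

@[simp]
theorem swap_p_zero (X : RPair A) : X.swap.p 0 = X.p 1 := rfl

@[simp]
theorem swap_p_one (X : RPair A) : X.swap.p 1 = X.p 0 := rfl

theorem ext_val {X Y : RPair A} (h0 : ∀ b, ((X.p 0) b).val = ((Y.p 0) b).val)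
    (h1 : ∀ b, ((X.p 1) b).val = ((Y.p 1) b).val) : X = Y := by
  obtain ⟨pX⟩ := X
  obtain ⟨pY⟩ := Y
  congr
  funext i
  fin_cases i
  · exact Equiv.ext fun b => Fin.ext (h0 b)
  · exact Equiv.ext fun b => Fin.ext (h1 b)

theorem eq_of_card_le_one (hA : Fintype.card A ≤ 1) (X Y : RPair A) : X = Y := by
  have hval (e f : A ≃ Fin (Fintype.card A)) (b : A) : (e b).val = (f b).val := by
    have := (e b).isLt
    have := (f b).isLt
    omega
  exact ext_val (hval _ _) (hval _ _)

end RPair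

theorem OrderReversing.swap {P : RPair A} (h : OrderReversing P) : OrderReversing P.swap :=
  fun b => by
    rw [RPair.swap_p_zero, RPair.swap_p_one, add_comm]
    exact h b

theorem StandardPair.swap {X : RPair A} (h : StandardPair X) : StandardPair X.swap :=
  ⟨h.2, h.1⟩

theorem Rmove.swap {ε : Fin 2} {X Y : RPair A} (h : Rmove ε X Y) :
    Rmove (1 - ε) X.swap Y.swap := by
  simpa only [Rmove, RPair.swap, sub_sub_cancel] using h

namespace RPair

open Rauzy

variable {P X Y : RPair A} {y z : List ℕ}

/-- `X` arises from `P` through the insertion data `(y, z)`: each row of `X` is the other row of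
`P` read backwards, with its first letters reinserted as prescribed by `insertionPos`. -/
structure IsInsertion (P X : RPair A) (y z : List ℕ) : Prop where
  data : IsInsertionData (Fintype.card A) y z
  row_zero : ∀ b, ((X.p 0) b).val = insertionPos (Fintype.card A) z ((P.p 1) b).val
  row_one : ∀ b, ((X.p 1) b).val = insertionPos (Fintype.card A) y ((P.p 0) b).val

theorem isInsertion_swap_iff : IsInsertion P.swap X.swap y z ↔ IsInsertion P X z y where
  mp h := ⟨h.data.symm, h.row_one, h.row_zero⟩
  mpr h := ⟨h.data.symm, h.row_one, h.row_zero⟩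

theorem IsInsertion.refl (hA : 2 ≤ Fintype.card A) (hor : OrderReversing P) :
    IsInsertion P P [] [] where
  data := .nil hA
  row_zero b := by have := hor b; rw [insertionPos_nil]; omega
  row_one b := by have := hor b; rw [insertionPos_nil]; omega

theorem IsInsertion.eq_of_nil (hor : OrderReversing P) (h : IsInsertion P X [] []) : X = P :=
  ext_val (fun b => by have := hor b; rw [h.row_zero, insertionPos_nil]; omega)
    (fun b => by have := hor b; rw [h.row_one, insertionPos_nil]; omega)

theorem IsInsertion.left_eq_nil_of_standard (hor : OrderReversing P) (h : IsInsertion P X y z)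
    (hX : StandardPair X) : y = [] := by
  have hn := h.data.length_add_length_add_two_le
  obtain ⟨b, hb⟩ : ∃ b, ((P.p 1) b).val = Fintype.card A - 1 :=
    ⟨(P.p 1).symm ⟨_, (by omega : Fintype.card A - 1 < Fintype.card A)⟩, by simp⟩
  have hXb : ((X.p 1) b).val = Fintype.card A - 1 :=
    hX.1 b (by rw [h.row_zero, hb, insertionPos_sub_one (by omega)])
  have hb0 : ((P.p 0) b).val = 0 := by have := hor b; omega
  rw [h.row_one, hb0] at hXb
  by_contra hy
  have := insertionPos_lt_of_lt_length (n := Fintype.card A) h.data.left.pairwise_le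
    (fun _ ha => h.data.left.le_length ha) hn (List.length_pos_of_ne_nil hy)
  omega

theorem IsInsertion.rmove_zero (hor : OrderReversing P) (h : IsInsertion P X y z)
    (hm : Rmove 0 X Y) : ∃ y', IsInsertion P Y y' z := by
  have hn := h.data.length_add_length_add_two_le
  obtain ⟨w, hw⟩ : ∃ w, ((P.p 1) w).val = z.length :=
    ⟨(P.p 1).symm ⟨_, (by omega : z.length < Fintype.card A)⟩, by simp⟩
  have hw0 : ((P.p 0) w).val = Fintype.card A - 1 - z.length := by have := hor w; omega
  have hXw : ((X.p 0) w).val = Fintype.card A - 1 := by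
    rw [h.row_zero, hw]
    exact insertionPos_length (fun _ ha => h.data.right.le_length ha) (by omega)
  have hXw1 : ((X.p 1) w).val = z.length + y.countLt z.length := by
    rw [h.row_one, hw0, insertionPos_of_length_le (by omega), Nat.sub_sub_self (by omega)]
  have hY0 : ∀ b, ((Y.p 0) b).val = insertionPos (Fintype.card A) z ((P.p 1) b).val := by
    rw [hm.1]
    exact h.row_zero
  have hY1 : ∀ b, ((Y.p 1) b).val = cycleAfter (Fintype.card A) (z.length + y.countLt z.length)
      (insertionPos (Fintype.card A) y ((P.p 0) b).val) := fun b => by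
    rw [← hXw1, ← h.row_one]
    exact hm.2 w hXw b
  have hy := h.data.left.pairwise_le
  have hb := fun a (ha : a ∈ y) => h.data.left.le_length ha
  rcases hn.lt_or_eq with hlt | heq
  · exact ⟨_, h.data.append (by omega), hY0, fun b =>
      (hY1 b).trans (cycleAfter_insertionPos_append hy hb (by omega) ((P.p 0) b).isLt)⟩
  · exact ⟨_, h.data.take_countLt, hY0, fun b =>
      (hY1 b).trans (cycleAfter_insertionPos_take hy hb heq ((P.p 0) b).isLt)⟩

theorem IsInsertion.rmove (hor : OrderReversing P) (h : IsInsertion P X y z) {ε : Fin 2}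
    (hm : Rmove ε X Y) : ∃ y' z', IsInsertion P Y y' z' := by
  fin_cases ε
  · obtain ⟨y', h'⟩ := h.rmove_zero hor hm
    exact ⟨y', z, h'⟩
  · obtain ⟨z', h'⟩ := (isInsertion_swap_iff.2 h).rmove_zero hor.swap hm.swap
    exact ⟨y, z', isInsertion_swap_iff.1 h'⟩

end RPair

theorem order_reversing_unique_standard_general
    {A : Type*} [Fintype A] (P : RPair A)
    (hor : OrderReversing P) :
    ∀ Q : RPair A, InRauzyClass P Q → StandardPair Q → Q = P := by
  intro Q hPQ
  rcases le_or_gt (Fintype.card A) 1 with hA | hA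
  · exact fun _ => RPair.eq_of_card_le_one hA Q P
  obtain ⟨y, z, h⟩ : ∃ y z, RPair.IsInsertion P Q y z := by
    induction hPQ with
    | refl => exact ⟨[], [], .refl hA hor⟩
    | tail _ hmove ih =>
      obtain ⟨y, z, h⟩ := ih
      obtain ⟨ε, hm⟩ := hmove
      exact h.rmove hor hm
  intro hQ
  obtain rfl := h.left_eq_nil_of_standard hor hQ
  obtain rfl := (RPair.isInsertion_swap_iff.2 h).left_eq_nil_of_standard hor.swap hQ.swap
  exact h.eq_of_nil hor

/-- An order reversing pair is the only standard pair in its Rauzy class. -/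
theorem order_reversing_unique_standard
    {A : Type*} [Fintype A] (P : RPair A) (hP : IrreduciblePair P)
    (hor : OrderReversing P) :
    ∀ Q : RPair A, InRauzyClass P Q → StandardPair Q → Q = P :=
  order_reversing_unique_standard_general P hor
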